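/- Let A : U → U' be induced by an SPD bilinear form a on a finite-dimensional space U, let U = Σ_{j=1}^J I_j U_j be an additive Schwarz decomposition with A_j the restrictions of A to subspaces U_j, and B = Σ_j I_j A_j^{-1} I_j^t. Suppose every u ∈ U admits a decomposition u = Σ_j I_j u_j with Σ_j a(u_j, u_j) ≤ C₀ a(u, u), and each u can be written in at most N_c overlapping subspaces (λ_max(BA) ≤ N_c). Then the spectrum of BA lies in [C₀^{-1}, N_c], so κ(BA) ≤ C₀ N_c. -/
import Mathlib


/-- abstract additive Schwarz theory. Let `a` be an SPD bilinear
form on a finite-dimensional space `U`, `W j` subspaces with `a`-orthogonal-type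
projections `P j` (so that `B A = Σ_j P j`). If every `u` admits a stable
decomposition `u = Σ_j w j`, `w j ∈ W j`, with `Σ_j a(w j, w j) ≤ C₀ a(u,u)`,
and `a((Σ_j P j) u, u) ≤ N_c a(u,u)` for all `u`, then the spectrum of `BA`
lies in `[C₀⁻¹, N_c]`; in particular `κ(BA) ≤ C₀ N_c`. -/
theorem statement10 {U : Type*} [AddCommGroup U] [Module ℝ U] [Module.Finite ℝ U]
    (a : U →ₗ[ℝ] U →ₗ[ℝ] ℝ)
    (hsymm : ∀ u v : U, a u v = a v u)
    (hpos : ∀ u : U, u ≠ 0 → 0 < a u u)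
    (J : ℕ) (W : Fin J → Submodule ℝ U)
    (P : Fin J → U →ₗ[ℝ] U)
    (hP : ∀ j (u : U), P j u ∈ W j ∧ ∀ v ∈ W j, a (P j u) v = a u v)
    (C₀ Nc : ℝ) (hC₀ : 0 < C₀) (hNc : 0 < Nc)
    (hdecomp : ∀ u : U, ∃ w : Fin J → U, (∀ j, w j ∈ W j) ∧ (∑ j, w j) = u ∧
        ∑ j, a (w j) (w j) ≤ C₀ * a u u)
    (hmax : ∀ u : U, a ((∑ j, P j : U →ₗ[ℝ] U) u) u ≤ Nc * a u u) :
    spectrum ℝ (∑ j, P j : Module.End ℝ U) ⊆ Set.Icc C₀⁻¹ Nc ∧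
    (∀ u : U, C₀⁻¹ * a u u ≤ a ((∑ j, P j : U →ₗ[ℝ] U) u) u ∧
        a ((∑ j, P j : U →ₗ[ℝ] U) u) u ≤ Nc * a u u) ∧
    (∀ μ ∈ spectrum ℝ (∑ j, P j : Module.End ℝ U),
      ∀ ν ∈ spectrum ℝ (∑ j, P j : Module.End ℝ U), μ ≤ C₀ * Nc * ν) := by

  have hnn : ∀ u : U, 0 ≤ a u u := by
    intro u
    rcases eq_or_ne u 0 with h | h
    · simp [h]
    · exact (hpos u h).le
  -- Cauchy–Schwarz for `a`
  have hcs : ∀ u v : U, (a u v) ^ 2 ≤ a u u * a v v := by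
    intro u v
    have expand : ∀ x y : ℝ,
        a (x • u - y • v) (x • u - y • v)
          = x ^ 2 * a u u - 2 * x * y * a u v + y ^ 2 * a v v := by
      intro x y
      simp only [map_sub, map_smul, LinearMap.sub_apply, LinearMap.smul_apply, smul_eq_mul]
      rw [hsymm v u]; ring
    rcases eq_or_ne v 0 with h | h
    · simp [h]
    · have hv := hpos v h
      have key := hnn (a v v • u - a u v • v)
      rw [expand (a v v) (a u v)] at key
      nlinarith [sq_nonneg (a u v)]
  -- the key lower bound (Lions' lemma)
  have hmin : ∀ u : U, C₀⁻¹ * a u u ≤ a ((∑ j, P j : U →ₗ[ℝ] U) u) u := by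
    intro u
    rcases eq_or_ne u 0 with h | h
    · simp [h]
    obtain ⟨w, hw, hsum, hstab⟩ := hdecomp u
    have hT : ((∑ j, P j : U →ₗ[ℝ] U) u) = ∑ j, P j u := by
      simp [LinearMap.sum_apply]
    have h1 : a u u = ∑ j, a (P j u) (w j) := by
      calc a u u = a u (∑ j, w j) := by rw [hsum]
      _ = ∑ j, a u (w j) := map_sum (a u) _ _
      _ = ∑ j, a (P j u) (w j) :=
          Finset.sum_congr rfl fun j _ => ((hP j u).2 (w j) (hw j)).symm
    have hTu : a ((∑ j, P j : U →ₗ[ℝ] U) u) u = ∑ j, a (P j u) (P j u) := by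
      rw [hT, hsymm, map_sum]
      exact Finset.sum_congr rfl fun j _ => ((hP j u).2 (P j u) (hP j u).1).symm
    set f : Fin J → ℝ := fun j => Real.sqrt (a (P j u) (P j u)) with hf
    set g : Fin J → ℝ := fun j => Real.sqrt (a (w j) (w j)) with hg
    have hterm : ∀ j, a (P j u) (w j) ≤ f j * g j := by
      intro j
      have h2 : a (P j u) (w j) ≤ Real.sqrt ((a (P j u) (w j)) ^ 2) := by
        rw [Real.sqrt_sq_eq_abs]; exact le_abs_self _
      calc a (P j u) (w j) ≤ Real.sqrt ((a (P j u) (w j)) ^ 2) := h2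
        _ ≤ Real.sqrt (a (P j u) (P j u) * a (w j) (w j)) :=
            Real.sqrt_le_sqrt (hcs _ _)
        _ = f j * g j := Real.sqrt_mul (hnn _) _
    have hS : a u u ≤ ∑ j, f j * g j := by
      rw [h1]; exact Finset.sum_le_sum fun j _ => hterm j
    have hfg : (∑ j, f j * g j) ^ 2 ≤ (∑ j, f j ^ 2) * (∑ j, g j ^ 2) :=
      Finset.sum_mul_sq_le_sq_mul_sq Finset.univ f g
    have hf2 : (∑ j, f j ^ 2) = a ((∑ j, P j : U →ₗ[ℝ] U) u) u := by
      rw [hTu]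
      exact Finset.sum_congr rfl fun j _ => Real.sq_sqrt (hnn _)
    have hg2 : (∑ j, g j ^ 2) ≤ C₀ * a u u := by
      calc (∑ j, g j ^ 2) = ∑ j, a (w j) (w j) :=
            Finset.sum_congr rfl fun j _ => Real.sq_sqrt (hnn _)
        _ ≤ C₀ * a u u := hstab
    have hupos := hpos u h
    have hkey : (a u u) ^ 2 ≤ a ((∑ j, P j : U →ₗ[ℝ] U) u) u * (C₀ * a u u) := by
      have h0 : 0 ≤ ∑ j, f j * g j := le_trans (hnn u) hS
      have h1' : (a u u) ^ 2 ≤ (∑ j, f j * g j) ^ 2 := by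
        exact pow_le_pow_left₀ (hnn u) hS 2
      have hTnn : 0 ≤ a ((∑ j, P j : U →ₗ[ℝ] U) u) u := by
        rw [← hf2]; positivity
      calc (a u u) ^ 2 ≤ (∑ j, f j * g j) ^ 2 := h1'
        _ ≤ (∑ j, f j ^ 2) * (∑ j, g j ^ 2) := hfg
        _ ≤ a ((∑ j, P j : U →ₗ[ℝ] U) u) u * (C₀ * a u u) := by
            rw [hf2]
            exact mul_le_mul_of_nonneg_left hg2 hTnn
    have hle : a u u ≤ C₀ * a ((∑ j, P j : U →ₗ[ℝ] U) u) u := by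
      nlinarith
    rw [inv_mul_le_iff₀ hC₀]
    linarith
  have hboth : ∀ u : U, C₀⁻¹ * a u u ≤ a ((∑ j, P j : U →ₗ[ℝ] U) u) u ∧
      a ((∑ j, P j : U →ₗ[ℝ] U) u) u ≤ Nc * a u u := fun u => ⟨hmin u, hmax u⟩
  have hspec : spectrum ℝ (∑ j, P j : Module.End ℝ U) ⊆ Set.Icc C₀⁻¹ Nc := by
    intro μ hμ
    have heig : Module.End.HasEigenvalue (∑ j, P j : Module.End ℝ U) μ :=
      (Module.End.hasEigenvalue_iff_mem_spectrum).mpr hμ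
    obtain ⟨v, hv⟩ := heig.exists_hasEigenvector
    have hvne : v ≠ 0 := hv.2
    have hvpos := hpos v hvne
    have happ : (∑ j, P j : U →ₗ[ℝ] U) v = μ • v := hv.apply_eq_smul
    have hval : a ((∑ j, P j : U →ₗ[ℝ] U) v) v = μ * a v v := by
      rw [happ, map_smul, LinearMap.smul_apply, smul_eq_mul]
    obtain ⟨hl, hr⟩ := hboth v
    rw [hval] at hl hr
    constructor
    · exact le_of_mul_le_mul_right (by linarith) hvpos
    · exact le_of_mul_le_mul_right (by linarith) hvpos
  refine ⟨hspec, hboth, ?_⟩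
  intro μ hμ ν hν
  obtain ⟨_, hμ2⟩ := hspec hμ
  obtain ⟨hν1, _⟩ := hspec hν
  have : C₀ * Nc * C₀⁻¹ ≤ C₀ * Nc * ν := by
    apply mul_le_mul_of_nonneg_left hν1
    positivity
  have h2 : C₀ * Nc * C₀⁻¹ = Nc := by field_simp
  linarith
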